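/- arXiv:1208.1863 — 4 statements merged into one kernel-verified Lean document; each statement's English description precedes it below -/
import Mathlib

section
/- Let $V$ be a normed linear space over $\mathbb{C}$ and $v_1,\ldots,v_n \in V$. Then $\max\{\|\sum_{k=1}^n \alpha_k v_k\| : \alpha_k \in \mathbb{C}, |\alpha_k| = 1\} \leq 2 \max\{\|\sum_{k=1}^n \varepsilon_k v_k\| : \varepsilon_k \in \{-1, 1\}\}$. -/
/-!
The map `c ↦ ‖∑ cₖ vₖ‖` is convex on the real cube `[-1, 1]ⁿ`, which is the convex hull of the
sign vectors, so over the cube it is maximised at a sign vector. Writing `αₖ = aₖ + i bₖ`, the real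
and imaginary parts lie in the cube, whence `‖∑ αₖ vₖ‖ ≤ ‖∑ aₖ vₖ‖ + ‖∑ bₖ vₖ‖` is at most twice
that maximum.
-/

open Finset

lemma convexHull_pi_one_neg_one (ι : Type*) [Finite ι] :
    convexHull ℝ (Set.univ.pi fun _ : ι => ({1, -1} : Set ℝ)) =
      {c : ι → ℝ | ∀ k, |c k| ≤ 1} := by
  rw [convexHull_pi, convexHull_pair, segment_symm, segment_eq_Icc (by norm_num)]
  ext c
  simp [abs_le, Pi.le_def, forall_and]

lemma exists_sign_forall_norm_sum_smul_le {ι V : Type*} [Fintype ι] [NormedAddCommGroup V]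
    [NormedSpace ℝ V] (v : ι → V) :
    ∃ e : ι → ℝ, (∀ k, e k = 1 ∨ e k = -1) ∧
      ∀ c : ι → ℝ, (∀ k, |c k| ≤ 1) → ‖∑ k, c k • v k‖ ≤ ‖∑ k, e k • v k‖ := by
  set signs := Set.univ.pi fun _ : ι => ({1, -1} : Set ℝ)
  have hconvex : ConvexOn ℝ Set.univ fun c : ι → ℝ => ‖∑ k, c k • v k‖ := by
    simpa [Function.comp_def, Fintype.linearCombination_apply] using
      convexOn_univ_norm.comp_linearMap (Fintype.linearCombination ℝ v)
  obtain ⟨e, he, hmax⟩ := Set.exists_max_image signs (fun c => ‖∑ k, c k • v k‖)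
    (Set.Finite.pi fun _ => Set.toFinite _) ⟨fun _ => 1, by simp [signs]⟩
  refine ⟨e, fun k => by simpa using he k (Set.mem_univ k), fun c hc => ?_⟩
  have hc : c ∈ convexHull ℝ signs := by rwa [convexHull_pi_one_neg_one]
  obtain ⟨s, hs, hcs⟩ := hconvex.exists_ge_of_mem_convexHull (Set.subset_univ _) hc
  exact hcs.trans (hmax s hs)

lemma norm_sum_smul_le_re_add_im {ι V : Type*} [NormedAddCommGroup V] [NormedSpace ℂ V]
    (s : Finset ι) (α : ι → ℂ) (v : ι → V) :
    ‖∑ k ∈ s, α k • v k‖ ≤ ‖∑ k ∈ s, (α k).re • v k‖ + ‖∑ k ∈ s, (α k).im • v k‖ := by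
  have hsplit : ∑ k ∈ s, α k • v k =
      ∑ k ∈ s, (α k).re • v k + Complex.I • ∑ k ∈ s, (α k).im • v k := by
    rw [smul_sum, ← sum_add_distrib]
    refine sum_congr rfl fun k _ => ?_
    conv_lhs => rw [← Complex.re_add_im (α k)]
    rw [add_smul, mul_smul, Complex.coe_smul, Complex.coe_smul, smul_comm]
  calc ‖∑ k ∈ s, α k • v k‖
      ≤ ‖∑ k ∈ s, (α k).re • v k‖ + ‖Complex.I • ∑ k ∈ s, (α k).im • v k‖ :=
        hsplit ▸ norm_add_le _ _
    _ = ‖∑ k ∈ s, (α k).re • v k‖ + ‖∑ k ∈ s, (α k).im • v k‖ := by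
        rw [norm_smul, Complex.norm_I, one_mul]

/-- For a complex normed space `V` and vectors `v 1, ..., v n`, the max of
`‖∑ αₖ • vₖ‖` over unimodular `αₖ ∈ ℂ` is at most twice the max of
`‖∑ εₖ • vₖ‖` over signs `εₖ = ±1`. -/
theorem stmt_0 (V : Type*) [NormedAddCommGroup V] [NormedSpace ℂ V]
    (n : ℕ) (v : Fin n → V) (α : Fin n → ℂ) (hα : ∀ k, ‖α k‖ = 1) :
    ∃ ε : Fin n → ℂ, (∀ k, ε k = 1 ∨ ε k = -1) ∧
      ‖∑ k, α k • v k‖ ≤ 2 * ‖∑ k, ε k • v k‖ := by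
  obtain ⟨e, he, hmax⟩ := exists_sign_forall_norm_sum_smul_le v
  refine ⟨fun k => (e k : ℂ), fun k => by rcases he k with h | h <;> simp [h], ?_⟩
  have hre : ‖∑ k, (α k).re • v k‖ ≤ ‖∑ k, e k • v k‖ :=
    hmax _ fun k => (Complex.abs_re_le_norm _).trans (hα k).le
  have him : ‖∑ k, (α k).im • v k‖ ≤ ‖∑ k, e k • v k‖ :=
    hmax _ fun k => (Complex.abs_im_le_norm _).trans (hα k).le
  simp only [Complex.coe_smul]
  linarith [norm_sum_smul_le_re_add_im univ α v]
end

section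
/- Every finite-dimensional normed linear space has $M$-cotype $1$, i.e., there exists $C > 0$ such that for all $n$ and all $v_1,\ldots,v_n \in V$, $\max\{\|\sum_{k=1}^n \varepsilon_k v_k\| : \varepsilon_k = \pm 1\} \geq C \sum_{k=1}^n \|v_k\|$. -/
/-!
Choose finitely many functionals `fᵢ` with `‖x‖ ≤ ∑ᵢ |fᵢ x|` (rescaled coordinates of a basis).
For each `i`, taking `εₖ` to be the sign of `fᵢ vₖ` gives
`∑ₖ |fᵢ vₖ| = fᵢ (∑ₖ εₖ vₖ) ≤ ‖fᵢ‖ ‖∑ₖ εₖ vₖ‖`, so summing over `i` bounds `∑ₖ ‖vₖ‖` by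
`(∑ᵢ ‖fᵢ‖)` times the largest norm of a signed sum.
-/

open Finset

noncomputable def signs (ι : Type*) [Fintype ι] [DecidableEq ι] : Finset (ι → ℝ) :=
  Fintype.piFinset fun _ => {1, -1}

theorem mem_signs {ι : Type*} [Fintype ι] [DecidableEq ι] {ε : ι → ℝ} :
    ε ∈ signs ι ↔ ∀ k, ε k = 1 ∨ ε k = -1 := by
  simp [signs]

theorem exists_norm_le_sum_norm_apply (𝕜 E : Type*) [RCLike 𝕜] [NormedAddCommGroup E]
    [NormedSpace 𝕜 E] [FiniteDimensional 𝕜 E] :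
    ∃ f : Fin (Module.finrank 𝕜 E) → E →L[𝕜] 𝕜, ∀ x, ‖x‖ ≤ ∑ i, ‖f i x‖ := by
  let b := Module.finBasis 𝕜 E
  refine ⟨fun i => (‖b i‖ : 𝕜) • LinearMap.toContinuousLinearMap (b.coord i), fun x => ?_⟩
  calc ‖x‖ = ‖∑ i, b.repr x i • b i‖ := by rw [b.sum_repr x]
    _ ≤ ∑ i, ‖b.repr x i • b i‖ := norm_sum_le _ _
    _ = _ := by simp [norm_smul, mul_comm]

section Signs

variable {E ι : Type*} [NormedAddCommGroup E] [NormedSpace ℝ E] [Fintype ι] [DecidableEq ι]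

theorem exists_mem_signs_sum_norm_apply_le (f : E →L[ℝ] ℝ) (v : ι → E) :
    ∃ ε ∈ signs ι, ∑ k, ‖f (v k)‖ ≤ ‖f‖ * ‖∑ k, ε k • v k‖ := by
  let ε : ι → ℝ := fun k => if 0 ≤ f (v k) then 1 else -1
  have hε : ∀ k, ε k * f (v k) = ‖f (v k)‖ := by
    intro k
    by_cases h : 0 ≤ f (v k)
    · simp [ε, h, abs_of_nonneg h]
    · simp [ε, h, abs_of_neg (not_le.mp h)]
  refine ⟨ε, mem_signs.2 fun k => by by_cases h : 0 ≤ f (v k) <;> simp [ε, h], ?_⟩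
  calc ∑ k, ‖f (v k)‖ = f (∑ k, ε k • v k) := by simp [map_sum, hε]
    _ ≤ ‖f (∑ k, ε k • v k)‖ := Real.le_norm_self _
    _ ≤ ‖f‖ * ‖∑ k, ε k • v k‖ := f.le_opNorm _

theorem sum_norm_le_mul_norm_of_forall_signs_le {κ : Type*} [Fintype κ] (f : κ → E →L[ℝ] ℝ)
    (hf : ∀ x, ‖x‖ ≤ ∑ i, ‖f i x‖) (v : ι → E) {ε : ι → ℝ}
    (hmax : ∀ η ∈ signs ι, ‖∑ k, η k • v k‖ ≤ ‖∑ k, ε k • v k‖) :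
    ∑ k, ‖v k‖ ≤ (∑ i, ‖f i‖) * ‖∑ k, ε k • v k‖ := by
  have hcoord : ∀ i, ∑ k, ‖f i (v k)‖ ≤ ‖f i‖ * ‖∑ k, ε k • v k‖ := by
    intro i
    obtain ⟨η, hη, hle⟩ := exists_mem_signs_sum_norm_apply_le (f i) v
    exact hle.trans (mul_le_mul_of_nonneg_left (hmax η hη) (norm_nonneg _))
  calc ∑ k, ‖v k‖ ≤ ∑ k, ∑ i, ‖f i (v k)‖ := sum_le_sum fun k _ => hf (v k)
    _ = ∑ i, ∑ k, ‖f i (v k)‖ := sum_comm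
    _ ≤ ∑ i, ‖f i‖ * ‖∑ k, ε k • v k‖ := sum_le_sum fun i _ => hcoord i
    _ = (∑ i, ‖f i‖) * ‖∑ k, ε k • v k‖ := (sum_mul ..).symm

end Signs

/-- Every finite-dimensional real normed space has `M`-cotype `1`. -/
theorem stmt_4 (V : Type*) [NormedAddCommGroup V] [NormedSpace ℝ V]
    [FiniteDimensional ℝ V] :
    ∃ C > (0 : ℝ), ∀ (n : ℕ) (v : Fin n → V),
      ∃ ε : Fin n → ℝ, (∀ k, ε k = 1 ∨ ε k = -1) ∧
        ‖∑ k, ε k • v k‖ ≥ C * ∑ k, ‖v k‖ := by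
  obtain ⟨f, hf⟩ := exists_norm_le_sum_norm_apply ℝ V
  set S := ∑ i, ‖f i‖
  refine ⟨(1 + S)⁻¹, by positivity, fun n v => ?_⟩
  obtain ⟨ε, hε, hmax⟩ := (signs (Fin n)).exists_max_image (fun η => ‖∑ k, η k • v k‖)
    ⟨fun _ => 1, mem_signs.2 fun _ => Or.inl rfl⟩
  refine ⟨ε, mem_signs.1 hε, ?_⟩
  rw [ge_iff_le, inv_mul_le_iff₀ (by positivity)]
  calc ∑ k, ‖v k‖ ≤ S * ‖∑ k, ε k • v k‖ := sum_norm_le_mul_norm_of_forall_signs_le f hf v hmax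
    _ ≤ (1 + S) * ‖∑ k, ε k • v k‖ := by gcongr; linarith
end

section
/- Let $X_1,\ldots,X_n$, $Y$ be normed linear spaces and $A_k \in \mathcal{B}(X_k, Y)$. Suppose $Y$ has $M$-cotype $\rho \in [1,\infty)$ with constant $C > 0$. Let $q \in [\rho, \infty]$ and define $r \in [\rho,\infty]$ by $1/q + 1/r = 1/\rho$. Define $B : \ell_q(X_1,\ldots,X_n) \to Y$ by $B(x_1,\ldots,x_n) = \sum_{k=1}^n A_k x_k$. Then $\|B\| \geq C \|(\|A_1\|,\ldots,\|A_n\|)\|_r$. -/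
/-!
Test `B` on `x = (ε_k t_k u_k)_k`, where `‖u_k‖ ≤ 1` nearly attains `‖A_k‖` and the signs `ε_k`
come from the cotype inequality for `v_k = t_k A_k u_k`; this gives
`C ‖(t_k ‖A_k‖)_k‖_ρ ≤ ‖B‖ ‖t‖_q` for every `t`. It remains to take for `t` the extremal vector of
Hölder's inequality `‖(t_k a_k)_k‖_ρ ≤ ‖t‖_q ‖a‖_r` at `a_k = ‖A_k‖`: `t_k = a_k ^ (r / q)` when
`‖a‖_r = 1` and `q, r < ∞`, the constant `1` when `q = ∞`, and a point mass at a largest `a_k`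
when `r = ∞`.
-/

open scoped ENNReal
open WithLp (toLp toLp_smul)

theorem PiLp.norm_mono {ι : Type*} [Fintype ι] {α β : ι → Type*}
    [∀ i, SeminormedAddCommGroup (α i)] [∀ i, SeminormedAddCommGroup (β i)]
    {p : ℝ≥0∞} (hp : p ≠ 0) {x : PiLp p α} {y : PiLp p β} (h : ∀ i, ‖x i‖ ≤ ‖y i‖) :
    ‖x‖ ≤ ‖y‖ := by
  rcases eq_or_ne p ∞ with rfl | hp_top
  · rw [PiLp.norm_eq_ciSup, PiLp.norm_eq_ciSup]
    exact ciSup_mono (Set.finite_range _).bddAbove h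
  · have hp_pos : 0 < p.toReal := ENNReal.toReal_pos hp hp_top
    rw [PiLp.norm_eq_sum hp_pos, PiLp.norm_eq_sum hp_pos]
    gcongr with i
    exact h i

theorem ContinuousLinearMap.exists_norm_le_one_opNorm_le_mul {𝕜 E F : Type*}
    [DenselyNormedField 𝕜] [NormedAddCommGroup E] [SeminormedAddCommGroup F]
    [NormedSpace 𝕜 E] [NormedSpace 𝕜 F] (A : E →L[𝕜] F) {c : ℝ} (hc : 1 < c) :
    ∃ u, ‖u‖ ≤ 1 ∧ ‖A‖ ≤ c * ‖A u‖ := by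
  rcases (norm_nonneg A).eq_or_lt with hA | hA
  · exact ⟨0, by simp, by simp [← hA]⟩
  have hc₀ : 0 < c := one_pos.trans hc
  obtain ⟨u, hu, hAu⟩ := A.exists_lt_apply_of_lt_opNorm (div_lt_self hA hc)
  exact ⟨u, hu.le, ((div_lt_iff₀' hc₀).1 hAu).le⟩

section Holder

variable {ι : Type*} [Fintype ι] {p q r : ℝ≥0∞}

theorem ENNReal.holderTriple_toReal (hp : p ≠ 0) (hq : q ≠ ∞) (hr : r ≠ ∞)
    (hpqr : 1 / q + 1 / r = 1 / p) : Real.HolderTriple q.toReal r.toReal p.toReal := by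
  have hq₀ : q ≠ 0 := by rintro rfl; simp [eq_comm, hp] at hpqr
  have hr₀ : r ≠ 0 := by rintro rfl; simp [eq_comm, hp] at hpqr
  refine ⟨?_, ENNReal.toReal_pos hq₀ hq, ENNReal.toReal_pos hr₀ hr⟩
  simpa [ENNReal.toReal_add, hq₀, hr₀, ENNReal.toReal_inv] using congrArg ENNReal.toReal hpqr

theorem PiLp.exists_norm_eq_one_norm_mul_eq_one (hp : p ≠ 0) (hq : q ≠ ∞) (hr : r ≠ ∞)
    (hpqr : 1 / q + 1 / r = 1 / p) (a : ι → ℝ) (ha : ‖toLp r a‖ = 1) :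
    ∃ t : ι → ℝ, ‖toLp q t‖ = 1 ∧ ‖toLp p (t * a)‖ = 1 := by
  have hQRP := ENNReal.holderTriple_toReal hp hq hr hpqr
  set P := p.toReal with hP_def
  set Q := q.toReal with hQ_def
  set R := r.toReal
  obtain ⟨hQ, hR, hP⟩ := hQRP.all_pos
  have hexp : (R / Q + 1) * P = R := by
    have := hQRP.inv_add_inv_eq_inv
    field_simp at this ⊢
    linarith
  have hS : ∑ k, ‖a k‖ ^ R = 1 := by
    rwa [PiLp.norm_eq_sum hR, one_div, Real.rpow_inv_eq (by positivity) zero_le_one hR.ne',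
      Real.one_rpow] at ha
  refine ⟨fun k => ‖a k‖ ^ (R / Q), ?_, ?_⟩
  · have hterm (k : ι) : ‖‖a k‖ ^ (R / Q)‖ ^ Q = ‖a k‖ ^ R := by
      rw [Real.norm_of_nonneg (by positivity), ← Real.rpow_mul (norm_nonneg _),
        div_mul_cancel₀ _ hQ.ne']
    simp only [PiLp.norm_eq_sum hQ, ← hQ_def, hterm, hS, Real.one_rpow]
  · have hterm (k : ι) : ‖‖a k‖ ^ (R / Q) * a k‖ ^ P = ‖a k‖ ^ R := by
      rw [norm_mul, Real.norm_of_nonneg (by positivity), ← Real.rpow_add_one' (norm_nonneg _)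
        (by positivity), ← Real.rpow_mul (norm_nonneg _), hexp]
    simp only [PiLp.norm_eq_sum hP, Pi.mul_apply, ← hP_def, hterm, hS,
      Real.one_rpow]

theorem PiLp.exists_norm_le_one_one_le_norm_mul [Fact (1 ≤ p)] (hpqr : 1 / q + 1 / r = 1 / p)
    (a : ι → ℝ) (ha : ‖toLp r a‖ = 1) : ∃ t : ι → ℝ, ‖toLp q t‖ ≤ 1 ∧ 1 ≤ ‖toLp p (t * a)‖ := by
  have hp : p ≠ 0 := (zero_lt_one.trans_le Fact.out).ne'
  rcases eq_or_ne q ∞ with rfl | hq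
  · obtain rfl : r = p := by simpa using hpqr
    refine ⟨1, ?_, by rw [one_mul, ha]⟩
    rw [PiLp.norm_eq_ciSup]
    exact Real.iSup_le (fun _ => by simp) zero_le_one
  rcases eq_or_ne r ∞ with rfl | hr
  · obtain rfl : q = p := by simpa using hpqr
    rw [PiLp.norm_eq_ciSup] at ha
    have : Nonempty ι := by
      by_contra! h
      simp at ha
    obtain ⟨k, hk⟩ := exists_eq_ciSup_of_finite (f := fun k => ‖a k‖)
    classical
    refine ⟨Pi.single k 1, by simp [PiLp.toLp_single, PiLp.norm_single], ?_⟩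
    rw [← Pi.single_mul_left, one_mul, PiLp.toLp_single, PiLp.norm_single, hk, ha]
  · obtain ⟨t, ht, hta⟩ := exists_norm_eq_one_norm_mul_eq_one hp hq hr hpqr a ha
    exact ⟨t, ht.le, hta.ge⟩

theorem PiLp.exists_norm_le_one_norm_le_norm_mul [Fact (1 ≤ p)] [Fact (1 ≤ q)] [Fact (1 ≤ r)]
    (hpqr : 1 / q + 1 / r = 1 / p) (a : ι → ℝ) :
    ∃ t : ι → ℝ, ‖toLp q t‖ ≤ 1 ∧ ‖toLp r a‖ ≤ ‖toLp p (t * a)‖ := by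
  set N := ‖toLp r a‖
  rcases (norm_nonneg (toLp r a)).eq_or_lt with hN | hN
  · exact ⟨0, by simp, by simp [N, ← hN]⟩
  obtain ⟨t, ht, hta⟩ := exists_norm_le_one_one_le_norm_mul hpqr (N⁻¹ • a)
    (by rw [toLp_smul, norm_smul, norm_inv, norm_norm, inv_mul_cancel₀ hN.ne'])
  refine ⟨t, ht, ?_⟩
  calc N ≤ N * ‖toLp p (t * N⁻¹ • a)‖ := le_mul_of_one_le_right hN.le hta
    _ = ‖toLp p (t * a)‖ := by
      rw [mul_smul_comm, toLp_smul, norm_smul, norm_inv, norm_norm, mul_inv_cancel_left₀ hN.ne']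

end Holder

def HasMCotype (𝕜 Y : Type*) [RCLike 𝕜] [NormedAddCommGroup Y] [NormedSpace 𝕜 Y] (ρ C : ℝ) :
    Prop :=
  ∀ (m : ℕ) (v : Fin m → Y), ∃ ε : Fin m → 𝕜, (∀ j, ε j = 1 ∨ ε j = -1) ∧
    ‖∑ j, ε j • v j‖ ≥ C * (∑ j, ‖v j‖ ^ ρ) ^ (1 / ρ)

namespace HasMCotype

variable {𝕜 Y : Type*} [RCLike 𝕜] [NormedAddCommGroup Y] [NormedSpace 𝕜 Y] {ρ C : ℝ}
  {n : ℕ} {X : Fin n → Type*} [∀ k, NormedAddCommGroup (X k)] [∀ k, NormedSpace 𝕜 (X k)]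
  {q : ℝ≥0∞} [Fact (1 ≤ q)] {A : ∀ k, X k →L[𝕜] Y} {B : PiLp q X →L[𝕜] Y}

theorem le_opNorm_mul_norm_of_norm_le_one (hY : HasMCotype 𝕜 Y ρ C) (hρ : 0 < ρ)
    (hB : ∀ x, B x = ∑ k, A k (x k)) (t : Fin n → ℝ) {u : ∀ k, X k} (hu : ∀ k, ‖u k‖ ≤ 1) :
    C * ‖toLp (ENNReal.ofReal ρ) fun k => t k * ‖A k (u k)‖‖ ≤ ‖B‖ * ‖toLp q t‖ := by
  obtain ⟨ε, hε, hεv⟩ := hY n fun k => (t k : 𝕜) • A k (u k)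
  have hε_norm (k : Fin n) : ‖ε k‖ = 1 := by rcases hε k with h | h <;> simp [h]
  let x : PiLp q X := toLp q fun k => (ε k * t k) • u k
  have hx : ‖x‖ ≤ ‖toLp q t‖ := by
    refine PiLp.norm_mono (zero_lt_one.trans_le Fact.out).ne' fun k => ?_
    simpa [x, norm_smul, hε_norm] using mul_le_of_le_one_right (abs_nonneg (t k)) (hu k)
  calc C * ‖toLp (ENNReal.ofReal ρ) fun k => t k * ‖A k (u k)‖‖
      = C * (∑ k, ‖(t k : 𝕜) • A k (u k)‖ ^ ρ) ^ (1 / ρ) := by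
        simp [PiLp.norm_eq_sum (ENNReal.toReal_ofReal hρ.le ▸ hρ), hρ.le, norm_smul]
    _ ≤ ‖∑ k, ε k • (t k : 𝕜) • A k (u k)‖ := hεv
    _ = ‖B x‖ := by simp [hB, x, mul_smul]
    _ ≤ ‖B‖ * ‖toLp q t‖ := B.le_opNorm_of_le hx

theorem le_opNorm_mul_norm (hY : HasMCotype 𝕜 Y ρ C) (hρ : 1 ≤ ρ) (hC : 0 ≤ C)
    (hB : ∀ x, B x = ∑ k, A k (x k)) (t : Fin n → ℝ) :
    C * ‖toLp (ENNReal.ofReal ρ) fun k => t k * ‖A k‖‖ ≤ ‖B‖ * ‖toLp q t‖ := by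
  have : Fact (1 ≤ ENNReal.ofReal ρ) := ⟨by simpa using hρ⟩
  rw [le_iff_forall_one_lt_le_mul₀ (by positivity)]
  intro c hc
  choose u hu hAu using fun k => (A k).exists_norm_le_one_opNorm_le_mul hc
  calc C * ‖toLp (ENNReal.ofReal ρ) fun k => t k * ‖A k‖‖
      ≤ C * ‖toLp (ENNReal.ofReal ρ) (c • fun k => t k * ‖A k (u k)‖)‖ := by
        gcongr
        refine PiLp.norm_mono (by simpa using one_pos.trans_le hρ) fun k => ?_
        simpa [abs_of_pos (one_pos.trans hc), mul_left_comm c]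
          using mul_le_mul_of_nonneg_left (hAu k) (abs_nonneg (t k))
    _ = c * (C * ‖toLp (ENNReal.ofReal ρ) fun k => t k * ‖A k (u k)‖‖) := by
        rw [toLp_smul, norm_smul, Real.norm_of_nonneg (one_pos.trans hc).le]
        ring
    _ ≤ c * (‖B‖ * ‖toLp q t‖) := mul_le_mul_of_nonneg_left
        (hY.le_opNorm_mul_norm_of_norm_le_one (one_pos.trans_le hρ) hB t hu) (by positivity)
    _ = ‖B‖ * ‖toLp q t‖ * c := mul_comm _ _

end HasMCotype

theorem stmt_8_general (𝕜 : Type*) [RCLike 𝕜] (n : ℕ) (X : Fin n → Type*)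
    [∀ k, NormedAddCommGroup (X k)] [∀ k, NormedSpace 𝕜 (X k)]
    (Y : Type*) [NormedAddCommGroup Y] [NormedSpace 𝕜 Y]
    (A : ∀ k, X k →L[𝕜] Y)
    (ρ : ℝ) (hρ : 1 ≤ ρ) (C : ℝ) (hC : 0 < C)
    (hcotype : ∀ (m : ℕ) (v : Fin m → Y),
      ∃ ε : Fin m → 𝕜, (∀ j, ε j = 1 ∨ ε j = -1) ∧
        ‖∑ j, ε j • v j‖ ≥ C * (∑ j, ‖v j‖ ^ ρ) ^ (1 / ρ))
    (q r : ℝ≥0∞) [Fact (1 ≤ q)] [Fact (1 ≤ r)]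
    (hqr : 1 / q + 1 / r = 1 / ENNReal.ofReal ρ)
    (B : PiLp q X →L[𝕜] Y)
    (hB : ∀ x : PiLp q X, B x = ∑ k, A k (x k)) :
    ‖B‖ ≥ C * ‖(WithLp.equiv r (Fin n → ℝ)).symm (fun k => ‖A k‖)‖ := by
  have : Fact (1 ≤ ENNReal.ofReal ρ) := ⟨by simpa using hρ⟩
  obtain ⟨t, ht, hAt⟩ := PiLp.exists_norm_le_one_norm_le_norm_mul hqr fun k => ‖A k‖
  calc C * ‖toLp r fun k => ‖A k‖‖
      ≤ C * ‖toLp (ENNReal.ofReal ρ) (t * fun k => ‖A k‖)‖ := by gcongr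
    _ ≤ ‖B‖ * ‖toLp q t‖ := HasMCotype.le_opNorm_mul_norm hcotype hρ hC.le hB t
    _ ≤ ‖B‖ := mul_le_of_le_one_right (norm_nonneg B) ht

/-- Main lemma: if `Y` has `M`-cotype `ρ` with constant `C`,
`1/q + 1/r = 1/ρ` with `q ∈ [ρ, ∞]`, and `B : ℓ_q(X₁,…,Xₙ) → Y` is given by
`B (x₁,…,xₙ) = ∑ Aₖ xₖ`, then `‖B‖ ≥ C * ‖(‖A₁‖,…,‖Aₙ‖)‖_r`. -/
theorem stmt_8 (𝕜 : Type*) [RCLike 𝕜] (n : ℕ) (X : Fin n → Type*)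
    [∀ k, NormedAddCommGroup (X k)] [∀ k, NormedSpace 𝕜 (X k)]
    (Y : Type*) [NormedAddCommGroup Y] [NormedSpace 𝕜 Y]
    (A : ∀ k, X k →L[𝕜] Y)
    (ρ : ℝ) (hρ : 1 ≤ ρ) (C : ℝ) (hC : 0 < C)
    (hcotype : ∀ (m : ℕ) (v : Fin m → Y),
      ∃ ε : Fin m → 𝕜, (∀ j, ε j = 1 ∨ ε j = -1) ∧
        ‖∑ j, ε j • v j‖ ≥ C * (∑ j, ‖v j‖ ^ ρ) ^ (1 / ρ))
    (q r : ℝ≥0∞) [Fact (1 ≤ q)] [Fact (1 ≤ r)]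
    (hq : ENNReal.ofReal ρ ≤ q) (hqr : 1 / q + 1 / r = 1 / ENNReal.ofReal ρ)
    (B : PiLp q X →L[𝕜] Y)
    (hB : ∀ x : PiLp q X, B x = ∑ k, A k (x k)) :
    ‖B‖ ≥ C * ‖(WithLp.equiv r (Fin n → ℝ)).symm (fun k => ‖A k‖)‖ :=
  stmt_8_general 𝕜 n X Y A ρ hρ C hC hcotype q r hqr B hB
end

section
/- Let $X$ be a Banach space whose dual $X^*$ has $M$-cotype $\rho \in [1,\infty)$, let $Y_k$ be normed spaces and $A_k \in \mathcal{B}(X, Y_k)$ for $k \geq 1$. Let $p \in [1, \rho/(\rho-1)]$ and define $r$ by $1/p - 1/r = 1 - 1/\rho$. If the sequence $(\|A_1\|, \|A_2\|, \ldots) \notin \ell_r$, then the set $\mathcal{D}_p = \{x \in X : (\|A_1 x\|, \|A_2 x\|, \ldots) \notin \ell_p\}$ is dense in $X$. -/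
open scoped ENNReal

/-!
Suppose `𝒟_p` is not dense. Its complement `{x : (‖A_k x‖) ∈ ℓ_p}` is a subspace, so it has
nonempty interior only if it is all of `X`. Pick norming functionals `φ_k` with
`|φ_k x| ≤ ‖A_k x‖` and `‖A_k‖ ≤ 2‖φ_k‖`; by the closed graph theorem `x ↦ (φ_k x)` is a bounded
operator `T : X → ℓ_p`. Testing the cotype inequality of `X*` on the functionals `λ_k φ_k`,
`k ∈ F`, with `λ_k = ‖φ_k‖^(r/ρ - 1)`, and bounding `‖∑ ± λ_k φ_k‖` by Hölder's inequality
against `T`, gives `C S^(1/ρ) ≤ ‖T‖ S^(1 - 1/p)` for `S = ∑_{k ∈ F} ‖φ_k‖^r`, i.e.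
`S^(1/r) ≤ ‖T‖ / C` uniformly in `F`. Hence `(‖A_k‖) ∈ ℓ_r`.
-/

theorem memℓp_of_not_dense_setOf_not_memℓp {𝕜 X ι : Type*} {E : ι → Type*}
    [NontriviallyNormedField 𝕜] [AddCommGroup X] [TopologicalSpace X] [IsTopologicalAddGroup X]
    [Module 𝕜 X] [ContinuousSMul 𝕜 X] [∀ i, NormedAddCommGroup (E i)] [∀ i, NormedSpace 𝕜 (E i)]
    (A : ∀ i, X →ₗ[𝕜] E i) {p : ℝ≥0∞} (h : ¬ Dense {x | ¬ Memℓp (fun i => ‖A i x‖) p})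
    (x : X) : Memℓp (fun i => ‖A i x‖) p := by
  let S : Submodule 𝕜 X := (lpSubmodule 𝕜 E p).comap (LinearMap.pi A)
  have hmem (y : X) : y ∈ S ↔ Memℓp (fun i => ‖A i y‖) p := memℓp_norm_iff.symm
  have hS : (S : Set X) = {x | ¬ Memℓp (fun i => ‖A i x‖) p}ᶜ := by
    ext y
    simp [hmem]
  have hint : (interior (S : Set X)).Nonempty := by
    rwa [hS, interior_compl, Set.nonempty_compl, Ne, ← dense_iff_closure_eq]
  exact (hmem x).1 (S.eq_top_of_nonempty_interior' hint ▸ Submodule.mem_top)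

section lp

variable {𝕜 X ι : Type*} {E : ι → Type*} [NontriviallyNormedField 𝕜] [NormedAddCommGroup X]
  [NormedSpace 𝕜 X] [∀ i, NormedAddCommGroup (E i)] [∀ i, NormedSpace 𝕜 (E i)]
  {p : ℝ≥0∞} [Fact (1 ≤ p)]

theorem exists_continuousLinearMap_lp_of_forall_memℓp [CompleteSpace X]
    [∀ i, CompleteSpace (E i)] (φ : ∀ i, X →L[𝕜] E i) (h : ∀ x, Memℓp (fun i => φ i x) p) :
    ∃ T : X →L[𝕜] lp E p, ∀ x i, T x i = φ i x := by
  let T : X →ₗ[𝕜] lp E p :=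
    { toFun x := ⟨fun i => φ i x, h x⟩
      map_add' x y := by ext i; exact map_add (φ i) x y
      map_smul' c x := by ext i; simp }
  refine ⟨⟨T, T.continuous_of_seq_closed_graph fun u x y hu hTu => ?_⟩, fun x i => rfl⟩
  ext i
  have h1 : Filter.Tendsto (fun n => T (u n) i) Filter.atTop (nhds (y i)) :=
    ((lp.lipschitzWith_one_eval p i).continuous.tendsto y).comp hTu
  exact tendsto_nhds_unique h1 (((φ i).continuous.tendsto x).comp hu)

theorem norm_le_opNorm_of_lp_apply_eq {φ : ∀ i, X →L[𝕜] E i} {T : X →L[𝕜] lp E p}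
    (hT : ∀ x i, T x i = φ i x) (i : ι) : ‖φ i‖ ≤ ‖T‖ :=
  (φ i).opNorm_le_bound (norm_nonneg T) fun x => hT x i ▸
    (lp.norm_apply_le_norm (zero_lt_one.trans_le Fact.out).ne' (T x) i).trans (T.le_opNorm x)

theorem sum_norm_rpow_le_of_lp_apply_eq (hp : p ≠ ∞) {φ : ∀ i, X →L[𝕜] E i}
    {T : X →L[𝕜] lp E p} (hT : ∀ x i, T x i = φ i x) (s : Finset ι) (x : X) :
    (∑ i ∈ s, ‖φ i x‖ ^ p.toReal) ^ p.toReal⁻¹ ≤ ‖T‖ * ‖x‖ := by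
  have hp0 : 0 < p.toReal := ENNReal.toReal_pos (zero_lt_one.trans_le Fact.out).ne' hp
  calc (∑ i ∈ s, ‖φ i x‖ ^ p.toReal) ^ p.toReal⁻¹ ≤ (‖T x‖ ^ p.toReal) ^ p.toReal⁻¹ := by
        simp only [← hT]
        gcongr
        exact lp.sum_rpow_le_norm_rpow hp0 (T x) s
    _ = ‖T x‖ := Real.rpow_rpow_inv (norm_nonneg _) hp0.ne'
    _ ≤ ‖T‖ * ‖x‖ := T.le_opNorm x

end lp

theorem ContinuousLinearMap.exists_strongDual_norm_apply_le {𝕜 X Y : Type*} [RCLike 𝕜]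
    [NormedAddCommGroup X] [NormedSpace 𝕜 X] [NormedAddCommGroup Y] [NormedSpace 𝕜 Y]
    (T : X →L[𝕜] Y) : ∃ φ : StrongDual 𝕜 X, (∀ x, ‖φ x‖ ≤ ‖T x‖) ∧ ‖T‖ ≤ 2 * ‖φ‖ := by
  rcases (norm_nonneg T).eq_or_lt with hT | hT
  · exact ⟨0, fun x => by simp, by simp [← hT]⟩
  obtain ⟨x, hx, hTx⟩ := T.exists_lt_apply_of_lt_opNorm (half_lt_self hT)
  obtain ⟨g, hg, hgx⟩ := exists_dual_vector'' 𝕜 (T x)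
  refine ⟨g.comp T, fun y => ?_, ?_⟩
  · simpa using g.le_of_opNorm_le hg (T y)
  · have : ‖T x‖ ≤ ‖g.comp T‖ := by
      simpa [hgx] using (g.comp T).le_of_opNorm_le_of_le le_rfl hx.le
    linarith

theorem Real.inner_rpow_le_weight_mul_Lp_of_nonneg {ι : Type*} (s : Finset ι) {p : ℝ}
    (hp : 1 ≤ p) {w f : ι → ℝ} (hw : ∀ i ∈ s, 0 ≤ w i) (hf : ∀ i ∈ s, 0 ≤ f i) :
    ∑ i ∈ s, w i ^ (1 - p⁻¹) * f i ≤ (∑ i ∈ s, w i) ^ (1 - p⁻¹) * (∑ i ∈ s, f i ^ p) ^ p⁻¹ := by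
  obtain rfl | hp := hp.eq_or_lt
  · simp
  have hq : (1 - p⁻¹)⁻¹.HolderConjugate p :=
    .symm (Real.holderConjugate_iff.mpr ⟨hp, by simp⟩)
  have hwq (i : ι) (hi : i ∈ s) : (w i ^ (1 - p⁻¹)) ^ (1 - p⁻¹)⁻¹ = w i := by
    rw [← Real.rpow_mul (hw i hi), mul_inv_cancel₀ (by simp [sub_eq_zero, hp.ne']),
      Real.rpow_one]
  calc ∑ i ∈ s, w i ^ (1 - p⁻¹) * f i
      ≤ (∑ i ∈ s, (w i ^ (1 - p⁻¹)) ^ (1 - p⁻¹)⁻¹) ^ (1 / (1 - p⁻¹)⁻¹) *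
          (∑ i ∈ s, f i ^ p) ^ (1 / p) :=
        Real.inner_le_Lp_mul_Lq_of_nonneg s hq (fun i hi => by have := hw i hi; positivity) hf
    _ = (∑ i ∈ s, w i) ^ (1 - p⁻¹) * (∑ i ∈ s, f i ^ p) ^ p⁻¹ := by
        rw [Finset.sum_congr rfl hwq]
        simp

def HasMCotypeWith (𝕜 V : Type*) [NormedField 𝕜] [NormedAddCommGroup V] [Module 𝕜 V]
    (ρ C : ℝ) : Prop :=
  ∀ (m : ℕ) (v : Fin m → V), ∃ ε : Fin m → 𝕜, (∀ j, ε j = 1 ∨ ε j = -1) ∧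
    ‖∑ j, ε j • v j‖ ≥ C * (∑ j, ‖v j‖ ^ ρ) ^ (1 / ρ)

theorem HasMCotypeWith.exists_norm_eq_one {𝕜 V : Type*} [NormedField 𝕜] [NormedAddCommGroup V]
    [Module 𝕜 V] {ρ C : ℝ} (h : HasMCotypeWith 𝕜 V ρ C) {ι : Type*} [Fintype ι] (v : ι → V) :
    ∃ ε : ι → 𝕜, (∀ i, ‖ε i‖ = 1) ∧ C * (∑ i, ‖v i‖ ^ ρ) ^ (1 / ρ) ≤ ‖∑ i, ε i • v i‖ := by
  let e := Fintype.equivFin ι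
  obtain ⟨ε, hε, hle⟩ := h _ (v ∘ e.symm)
  refine ⟨ε ∘ e, fun i => by rcases hε (e i) with h | h <;> simp [h], ?_⟩
  simpa [← e.symm.sum_comp] using hle

theorem HasMCotypeWith.sum_norm_rpow_le {𝕜 X ι : Type*} [RCLike 𝕜] [NormedAddCommGroup X]
    [NormedSpace 𝕜 X] [Fintype ι] {ρ C M p r : ℝ} (hco : HasMCotypeWith 𝕜 (StrongDual 𝕜 X) ρ C)
    (hC : 0 < C) (hM : 0 ≤ M) (hp : 1 ≤ p) (hr : 0 < r) (hpr : p⁻¹ = 1 - ρ⁻¹ + r⁻¹)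
    (φ : ι → StrongDual 𝕜 X) (hφ : ∀ x, (∑ i, ‖φ i x‖ ^ p) ^ p⁻¹ ≤ M * ‖x‖) :
    ∑ i, ‖φ i‖ ^ r ≤ (M / C) ^ r := by
  generalize hS_def : ∑ i, ‖φ i‖ ^ r = S
  have hS0 : 0 ≤ S := hS_def ▸ Finset.sum_nonneg fun i _ => by positivity
  rcases hS0.eq_or_lt with hS | hS
  · rw [← hS]; positivity
  have hρ : 1 - p⁻¹ + r⁻¹ = ρ⁻¹ := by linarith
  have hp1 : 0 ≤ 1 - p⁻¹ := sub_nonneg.mpr (inv_le_one_of_one_le₀ hp)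
  have hρ0 : 0 < ρ := inv_pos.mp (hρ ▸ by positivity)
  -- `lam i = ‖φ i‖ ^ (r/ρ - 1)`: the weights for which Hölder's inequality below is sharp
  obtain ⟨lam, hlam_def⟩ : ∃ lam : ι → ℝ, ∀ i, lam i = (‖φ i‖ ^ r) ^ (1 - p⁻¹) :=
    ⟨_, fun _ => rfl⟩
  have hlam0 (i : ι) : 0 ≤ lam i := hlam_def i ▸ by positivity
  have hexp : (r * (1 - p⁻¹) + 1) * ρ = r := by
    rw [show 1 - p⁻¹ = ρ⁻¹ - r⁻¹ by linarith]
    field_simp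
    ring
  have hlam (i : ι) : ‖((lam i : ℝ) : 𝕜) • φ i‖ ^ ρ = ‖φ i‖ ^ r := by
    rw [norm_smul, RCLike.norm_ofReal, abs_of_nonneg (hlam0 i), hlam_def,
      ← Real.rpow_mul (norm_nonneg _), ← Real.rpow_add_one' (norm_nonneg _) (by nlinarith),
      ← Real.rpow_mul (norm_nonneg _), hexp]
  obtain ⟨ε, hε, hlow⟩ := hco.exists_norm_eq_one fun i => ((lam i : ℝ) : 𝕜) • φ i
  have hup : ‖∑ i, ε i • ((lam i : ℝ) : 𝕜) • φ i‖ ≤ M * S ^ (1 - p⁻¹) := by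
    refine ContinuousLinearMap.opNorm_le_bound _ (by positivity) fun x => ?_
    calc ‖(∑ i, ε i • ((lam i : ℝ) : 𝕜) • φ i) x‖ ≤ ∑ i, lam i * ‖φ i x‖ := by
          rw [sum_apply]
          refine (norm_sum_le _ _).trans (Finset.sum_le_sum fun i _ => le_of_eq ?_)
          simp [hε, abs_of_nonneg (hlam0 i)]
      _ ≤ S ^ (1 - p⁻¹) * (∑ i, ‖φ i x‖ ^ p) ^ p⁻¹ := by
          simp only [hlam_def, ← hS_def]
          exact Real.inner_rpow_le_weight_mul_Lp_of_nonneg _ hp (fun i _ => by positivity)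
            fun i _ => norm_nonneg _
      _ ≤ S ^ (1 - p⁻¹) * (M * ‖x‖) := by gcongr; exact hφ x
      _ = M * S ^ (1 - p⁻¹) * ‖x‖ := by ring
  rw [Finset.sum_congr rfl fun i _ => hlam i, hS_def] at hlow
  have hsplit : S ^ (1 / ρ) = S ^ r⁻¹ * S ^ (1 - p⁻¹) := by
    rw [← Real.rpow_add hS, one_div, ← hρ, add_comm]
  have key : C * S ^ r⁻¹ ≤ M := by
    have := hlow.trans hup
    rw [hsplit, ← mul_assoc] at this
    exact le_of_mul_le_mul_right this (by positivity)
  calc S = (S ^ r⁻¹) ^ r := by rw [Real.rpow_inv_rpow hS.le hr.ne']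
    _ ≤ (M / C) ^ r :=
      Real.rpow_le_rpow (Real.rpow_nonneg hS.le _) ((le_div_iff₀' hC).mpr key) hr.le

theorem ENNReal.toReal_inv_eq_of_one_div_eq {p r : ℝ≥0∞} {ρ : ℝ} (hρ : 1 ≤ ρ) (hp : 1 ≤ p)
    (hr : 1 / p = (1 - 1 / ENNReal.ofReal ρ) + 1 / r) (hr_top : r ≠ ∞) :
    p ≠ ∞ ∧ 0 < r.toReal ∧ p.toReal⁻¹ = 1 - ρ⁻¹ + r.toReal⁻¹ := by
  have hr0 : r ≠ 0 := by
    rintro rfl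
    simp only [one_div, ENNReal.inv_zero, add_top, ENNReal.inv_eq_top] at hr
    exact (zero_lt_one.trans_le hp).ne' hr
  have hp_top : p ≠ ∞ := by
    rintro rfl
    simp only [one_div, ENNReal.inv_top] at hr
    exact hr_top (ENNReal.inv_eq_zero.mp (add_eq_zero.mp hr.symm).2)
  have hρ' : 1 / ENNReal.ofReal ρ ≤ 1 := by
    rw [one_div]; exact ENNReal.inv_le_one.mpr (by simpa using ENNReal.ofReal_le_ofReal hρ)
  refine ⟨hp_top, ENNReal.toReal_pos hr0 hr_top, ?_⟩
  have := congrArg ENNReal.toReal hr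
  rwa [ENNReal.toReal_add (ENNReal.sub_ne_top one_ne_top) (by simpa using hr0),
    ENNReal.toReal_sub_of_le hρ' one_ne_top, one_div, one_div, one_div, ENNReal.toReal_inv,
    ENNReal.toReal_inv, ENNReal.toReal_inv, ENNReal.toReal_ofReal (by linarith),
    ENNReal.toReal_one] at this

theorem HasMCotypeWith.memℓp_of_lp_apply_eq {𝕜 X ι : Type*} [RCLike 𝕜] [NormedAddCommGroup X]
    [NormedSpace 𝕜 X] {ρ C : ℝ} {p r : ℝ≥0∞} [Fact (1 ≤ p)]
    (hco : HasMCotypeWith 𝕜 (StrongDual 𝕜 X) ρ C) (hC : 0 < C) (hρ : 1 ≤ ρ)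
    (hr : 1 / p = (1 - 1 / ENNReal.ofReal ρ) + 1 / r) {φ : ι → StrongDual 𝕜 X}
    {T : X →L[𝕜] lp (fun _ : ι => 𝕜) p} (hT : ∀ x i, T x i = φ i x) : Memℓp φ r := by
  rcases eq_or_ne r ∞ with rfl | hr_top
  · exact memℓp_infty ⟨‖T‖, Set.forall_mem_range.mpr (norm_le_opNorm_of_lp_apply_eq hT)⟩
  obtain ⟨hp_top, hr0, hpr⟩ := ENNReal.toReal_inv_eq_of_one_div_eq hρ Fact.out hr hr_top
  have hp : 1 ≤ p.toReal := by simpa using ENNReal.toReal_mono hp_top (Fact.out : 1 ≤ p)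
  refine memℓp_gen' (C := (‖T‖ / C) ^ r.toReal) fun s => ?_
  have := hco.sum_norm_rpow_le hC (norm_nonneg T) hp hr0 hpr (fun i : s => φ i) fun x => by
    rw [Finset.sum_coe_sort s fun i => ‖φ i x‖ ^ p.toReal]
    exact sum_norm_rpow_le_of_lp_apply_eq hp_top hT s x
  rwa [Finset.sum_coe_sort s fun i => ‖φ i‖ ^ r.toReal] at this

theorem stmt_9_general (𝕜 : Type*) [RCLike 𝕜] (X : Type*) [NormedAddCommGroup X]
    [NormedSpace 𝕜 X] [CompleteSpace X]
    (Y : ℕ → Type*) [∀ k, NormedAddCommGroup (Y k)] [∀ k, NormedSpace 𝕜 (Y k)]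
    (A : ∀ k, X →L[𝕜] Y k)
    (ρ : ℝ) (hρ : 1 ≤ ρ)
    (hcotype : ∃ C > (0 : ℝ), ∀ (m : ℕ) (v : Fin m → StrongDual 𝕜 X),
      ∃ ε : Fin m → 𝕜, (∀ j, ε j = 1 ∨ ε j = -1) ∧
        ‖∑ j, ε j • v j‖ ≥ C * (∑ j, ‖v j‖ ^ ρ) ^ (1 / ρ))
    (p r : ℝ≥0∞) (hp1 : 1 ≤ p)
    (hr : 1 / p = (1 - 1 / ENNReal.ofReal ρ) + 1 / r)
    (hA : ¬ Memℓp (fun k => ‖A k‖) r) :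
    Dense {x : X | ¬ Memℓp (fun k => ‖A k x‖) p} := by
  by_contra hD
  obtain ⟨C, hC, hco⟩ := hcotype
  have : Fact (1 ≤ p) := ⟨hp1⟩
  choose φ hφA hAφ using fun k => (A k).exists_strongDual_norm_apply_le
  have hmem (x : X) : Memℓp (fun k => φ k x) p :=
    (memℓp_of_not_dense_setOf_not_memℓp (fun k => (A k : X →ₗ[𝕜] Y k)) hD x).mono
      fun k => hφA k x
  obtain ⟨T, hT⟩ := exists_continuousLinearMap_lp_of_forall_memℓp φ hmem
  have hφ : Memℓp φ r := HasMCotypeWith.memℓp_of_lp_apply_eq hco hC hρ hr hT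
  exact hA ((hφ.norm.const_mul 2).mono fun k => by simpa using hAφ k)

/-- Theorem 1: if `X*` has `M`-cotype `ρ`, `p ∈ [1, ρ/(ρ-1)]`,
`1/p - 1/r = 1 - 1/ρ`, and `(‖A₁‖, ‖A₂‖, …) ∉ ℓ_r`, then
`𝒟_p = {x : (‖A₁x‖, ‖A₂x‖, …) ∉ ℓ_p}` is dense in `X`. -/
theorem stmt_9 (𝕜 : Type*) [RCLike 𝕜] (X : Type*) [NormedAddCommGroup X]
    [NormedSpace 𝕜 X] [CompleteSpace X]
    (Y : ℕ → Type*) [∀ k, NormedAddCommGroup (Y k)] [∀ k, NormedSpace 𝕜 (Y k)]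
    (A : ∀ k, X →L[𝕜] Y k)
    (ρ : ℝ) (hρ : 1 ≤ ρ)
    (hcotype : ∃ C > (0 : ℝ), ∀ (m : ℕ) (v : Fin m → StrongDual 𝕜 X),
      ∃ ε : Fin m → 𝕜, (∀ j, ε j = 1 ∨ ε j = -1) ∧
        ‖∑ j, ε j • v j‖ ≥ C * (∑ j, ‖v j‖ ^ ρ) ^ (1 / ρ))
    (p r : ℝ≥0∞) (hp1 : 1 ≤ p)
    (hp2 : p ≤ ENNReal.ofReal ρ / ENNReal.ofReal (ρ - 1))
    (hr : 1 / p = (1 - 1 / ENNReal.ofReal ρ) + 1 / r)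
    (hA : ¬ Memℓp (fun k => ‖A k‖) r) :
    Dense {x : X | ¬ Memℓp (fun k => ‖A k x‖) p} :=
  stmt_9_general 𝕜 X Y A ρ hρ hcotype p r hp1 hr hA
end
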